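/- Let a be an action eligible for rolling such that every variable occurring in a numeric precondition of a either is not assigned by a or is the target of a linear increment of a (no variable of a numeric precondition of a is the target of a simple or Boolean assignment of a). Let k ≥ 1 and let s be a state in which a is executable and which, for every numeric precondition ψ ⊵ 0 of a, satisfies ψ[a] ⊵ 0 with the action variable a interpreted as k (i.e., s(ψ) + (k−1)·s(Δ) ⊵ 0, where Δ = ∑ ψ₁ over the linear increments x += ψ₁ of a with x occurring in ψ, weighted by the coefficient of x in ψ). Then the sequence a^k is executable in s. -/
import Mathlib


open scoped Classical

namespace PatternPlanning

/-! ## Numeric planning problems -/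

/-- A linear expression `∑ w, coeff w * w + const` over the numeric variables `VN`. -/
structure LinExpr (VN : Type) where
  coeff : VN → ℚ
  const : ℚ

/-- Value of a linear expression under a numeric valuation. -/
def LinExpr.eval {VN : Type} [Fintype VN] (e : LinExpr VN) (ν : VN → ℚ) : ℚ :=
  (∑ w, e.coeff w * ν w) + e.const

/-- The comparison operators `≥ , > , =` of numeric conditions `ψ ⊵ 0`. -/
inductive CompOp : Type
  | ge | gt | eq

/-- `op.holds q` means `q ⊵ 0`. -/
def CompOp.holds : CompOp → ℚ → Prop
  | .ge, q => 0 ≤ q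
  | .gt, q => 0 < q
  | .eq, q => q = 0

/-- A numeric condition `ψ ⊵ 0`. -/
structure NumCond (VN : Type) where
  expr : LinExpr VN
  op : CompOp

def NumCond.holds {VN : Type} [Fintype VN] (c : NumCond VN) (ν : VN → ℚ) : Prop :=
  c.op.holds (c.expr.eval ν)

/-- A propositional condition `v = ⊤` or `v = ⊥`. -/
inductive PropCond (VB : Type)
  | isTrue (v : VB)
  | isFalse (v : VB)

def PropCond.holds {VB : Type} : PropCond VB → (VB → Bool) → Prop
  | .isTrue v, β => β v = true
  | .isFalse v, β => β v = false

/-- An action: propositional and numeric preconditions, Boolean effects `v := ⊤/⊥`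
and numeric effects `w := ψ` (each variable assigned at most once, enforced by
the functional representation of the effects). -/
structure Act (VB VN : Type) where
  preB : List (PropCond VB)
  preN : List (NumCond VN)
  effB : VB → Option Bool
  effN : VN → Option (LinExpr VN)

def Act.assignsB {VB VN : Type} (a : Act VB VN) (v : VB) : Prop := a.effB v ≠ none
def Act.assignsN {VB VN : Type} (a : Act VB VN) (x : VN) : Prop := a.effN x ≠ none

/-- The effect `x := e` is a linear increment `x += ψ` : `e = x + ψ` with `ψ` not
containing any variable assigned by `a`. -/
def Act.isIncr {VB VN : Type} (a : Act VB VN) (x : VN) (e : LinExpr VN) : Prop :=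
  e.coeff x = 1 ∧ ∀ y, a.assignsN y → y ≠ x → e.coeff y = 0

/-- The increment part `ψ` of a linear increment `x := x + ψ`. -/
noncomputable def incrPart {VN : Type} (e : LinExpr VN) (x : VN) : LinExpr VN :=
  ⟨Function.update e.coeff x 0, e.const⟩

/-- The (general) assignment `x := e` is simple: `e` contains no variable assigned by `a`. -/
def Act.isSimpleA {VB VN : Type} (a : Act VB VN) (e : LinExpr VN) : Prop :=
  ∀ y, a.assignsN y → e.coeff y = 0

/-- An action is eligible for rolling. -/
def Act.eligible {VB VN : Type} (a : Act VB VN) : Prop :=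
  (∀ v, PropCond.isFalse v ∈ a.preB → a.effB v ≠ some true) ∧
  (∀ v, PropCond.isTrue v ∈ a.preB → a.effB v ≠ some false) ∧
  (∀ x e, a.effN x = some e → a.isIncr x e ∨ a.isSimpleA e) ∧
  (∃ x e, a.effN x = some e ∧ a.isIncr x e)

/-- A state: values of the Boolean and numeric variables. -/
structure PState (VB VN : Type) where
  boolVal : VB → Bool
  numVal : VN → ℚ

/-- `a` is executable in `s`: all preconditions of `a` hold in `s`. -/
def Act.execIn {VB VN : Type} [Fintype VN] (a : Act VB VN) (s : PState VB VN) : Prop :=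
  (∀ c ∈ a.preB, c.holds s.boolVal) ∧ (∀ c ∈ a.preN, c.holds s.numVal)

/-- The result of executing `a` in `s`. -/
def Act.result {VB VN : Type} [Fintype VN] (a : Act VB VN) (s : PState VB VN) : PState VB VN where
  boolVal := fun v => (a.effB v).getD (s.boolVal v)
  numVal := fun x =>
    match a.effN x with
    | none => s.numVal x
    | some e => e.eval s.numVal

/-- Execution of a sequence of actions: `some` of the last induced state if the
sequence is executable, `none` otherwise. -/
noncomputable def execSeq {VB VN A : Type} [Fintype VN] (acts : A → Act VB VN) :
    List A → PState VB VN → Option (PState VB VN)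
  | [], s => some s
  | a :: rest, s =>
      if (acts a).execIn s then execSeq acts rest ((acts a).result s) else none

/-- Goal formulas: propositional combinations of propositional and numeric conditions. -/
inductive Formula (VB VN : Type)
  | prop (c : PropCond VB)
  | num (c : NumCond VN)
  | not (f : Formula VB VN)
  | and (f g : Formula VB VN)
  | or (f g : Formula VB VN)

def Formula.holds {VB VN : Type} [Fintype VN] :
    Formula VB VN → (VB → Bool) → (VN → ℚ) → Prop
  | .prop c, β, _ => c.holds β
  | .num c, _, ν => c.holds ν
  | .not f, β, ν => ¬ f.holds β ν
  | .and f g, β, ν => f.holds β ν ∧ g.holds β ν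
  | .or f g, β, ν => f.holds β ν ∨ g.holds β ν

/-- A numeric planning problem `Π = ⟨V_B, V_N, A, I, G⟩` (the sets of variables and
of actions are the types `VB`, `VN`, `A`). -/
structure Problem (VB VN A : Type) where
  acts : A → Act VB VN
  init : PState VB VN
  goals : List (Formula VB VN)

def Problem.goalSat {VB VN A : Type} [Fintype VN] (P : Problem VB VN A)
    (β : VB → Bool) (ν : VN → ℚ) : Prop :=
  ∀ f ∈ P.goals, f.holds β ν

/-- `α` is a valid plan for `P`. -/
def Problem.isPlan {VB VN A : Type} [Fintype VN] (P : Problem VB VN A) (α : List A) : Prop :=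
  ∃ s, execSeq P.acts α P.init = some s ∧ P.goalSat s.boolVal s.numVal

def Problem.hasPlan {VB VN A : Type} [Fintype VN] (P : Problem VB VN A) : Prop :=
  ∃ α, P.isPlan α

/-! ## ψ[a] : rolled substitution -/

/-- Value of the variable `x` in `ψ[a]` when the action variable of `a` takes value `k`:
`x + (k-1)·ψ₁` for a linear increment `x += ψ₁`, `ψ₁` for a simple assignment `x := ψ₁`,
`x` otherwise. -/
noncomputable def rolledVarVal {VB VN : Type} [Fintype VN] (a : Act VB VN) (k : ℕ)
    (ν : VN → ℚ) (x : VN) : ℚ :=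
  match a.effN x with
  | none => ν x
  | some e =>
      if a.isIncr x e then ν x + ((k : ℚ) - 1) * (incrPart e x).eval ν
      else if a.isSimpleA e then e.eval ν
      else ν x

/-- Value of `ψ[a]` under `ν` when the action variable of `a` takes the value `k`. -/
noncomputable def rolledEval {VB VN : Type} [Fintype VN] (a : Act VB VN) (k : ℕ)
    (ψ : LinExpr VN) (ν : VN → ℚ) : ℚ :=
  (∑ x, ψ.coeff x * rolledVarVal a k ν x) + ψ.const

/-! ## The rolled-up encoding Π^R and the standard encoding Π^S -/

def occursInPre {VB VN : Type} (a : Act VB VN) (x : VN) : Prop :=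
  ∃ c ∈ a.preN, c.expr.coeff x ≠ 0

def occursInEff {VB VN : Type} (a : Act VB VN) (x : VN) : Prop :=
  a.assignsN x ∨ ∃ y e, a.effN y = some e ∧ e.coeff x ≠ 0

/-- Condition under which `mutex^R(A)` contains `a₁ = 0 ∨ a₂ = 0`. -/
def mutexCond {VB VN : Type} (a₁ a₂ : Act VB VN) : Prop :=
  (∃ v, PropCond.isFalse v ∈ a₁.preB ∧ a₂.effB v = some true) ∨
  (∃ v, PropCond.isTrue v ∈ a₁.preB ∧ a₂.effB v = some false) ∨
  (∃ x, a₁.assignsN x ∧ (occursInEff a₂ x ∨ occursInPre a₂ x))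

/-- The symbolic transition relation `T^R(X,A,X')` of the rolled-up encoding, as a
predicate on the values `β,ν` for `X`, `u` for the (ℕ-valued) action variables `A`,
and `β',ν'` for `X'`. -/
def TR {VB VN A : Type} [Fintype VN] (P : Problem VB VN A)
    (β : VB → Bool) (ν : VN → ℚ) (u : A → ℕ) (β' : VB → Bool) (ν' : VN → ℚ) : Prop :=
  -- pre^R(A)
  (∀ a, 0 < u a →
    (∀ v, PropCond.isFalse v ∈ (P.acts a).preB → β v = false) ∧
    (∀ v, PropCond.isTrue v ∈ (P.acts a).preB → β v = true) ∧
    (∀ c ∈ (P.acts a).preN, c.op.holds (c.expr.eval ν))) ∧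
  (∀ a, 1 < u a → ∀ c ∈ (P.acts a).preN,
    c.op.holds (rolledEval (P.acts a) (u a) c.expr ν)) ∧
  -- eff^R(A)
  (∀ a, 0 < u a →
    (∀ v b, (P.acts a).effB v = some b → β' v = b) ∧
    (∀ x e, (P.acts a).effN x = some e →
      ((P.acts a).isIncr x e → ν' x = ν x + (u a : ℚ) * (incrPart e x).eval ν) ∧
      (¬ (P.acts a).isIncr x e → ν' x = e.eval ν))) ∧
  -- frame^R(V_B ∪ V_N)
  (∀ v, (∀ a, (P.acts a).assignsB v → u a = 0) → β' v = β v) ∧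
  (∀ x, (∀ a, (P.acts a).assignsN x → u a = 0) → ν' x = ν x) ∧
  -- mutex^R(A)
  (∀ a₁ a₂, a₁ ≠ a₂ → mutexCond (P.acts a₁) (P.acts a₂) → u a₁ = 0 ∨ u a₂ = 0) ∧
  -- amo^R(A)
  (∀ a, ¬ (P.acts a).eligible → u a ≤ 1)

/-- The symbolic transition relation `T^S` of the standard encoding: `T^R` plus
`a = 0 ∨ a = 1` for every action. -/
def TS {VB VN A : Type} [Fintype VN] (P : Problem VB VN A)
    (β : VB → Bool) (ν : VN → ℚ) (u : A → ℕ) (β' : VB → Bool) (ν' : VN → ℚ) : Prop :=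
  TR P β ν u β' ν' ∧ ∀ a, u a ≤ 1

/-- A (candidate) model of `Π^R_n` / `Π^S_n` : values for the `n+1` copies of the state
variables and the `n` copies of the ℕ-valued action variables. -/
structure RModel (VB VN A : Type) (n : ℕ) where
  β : Fin (n + 1) → VB → Bool
  ν : Fin (n + 1) → VN → ℚ
  u : Fin n → A → ℕ

def RModel.validWith {VB VN A : Type} {n : ℕ} [Fintype VN] (m : RModel VB VN A n)
    (P : Problem VB VN A)
    (T : (VB → Bool) → (VN → ℚ) → (A → ℕ) → (VB → Bool) → (VN → ℚ) → Prop) : Prop :=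
  m.β 0 = P.init.boolVal ∧ m.ν 0 = P.init.numVal ∧
  (∀ i : Fin n, T (m.β i.castSucc) (m.ν i.castSucc) (m.u i) (m.β i.succ) (m.ν i.succ)) ∧
  P.goalSat (m.β (Fin.last n)) (m.ν (Fin.last n))

/-- `m` is a model of `Π^R_n`. -/
def RModel.validR {VB VN A : Type} {n : ℕ} [Fintype VN] (m : RModel VB VN A n)
    (P : Problem VB VN A) : Prop :=
  m.validWith P (TR P)

/-- `m` is a model of `Π^S_n`. -/
def RModel.validS {VB VN A : Type} {n : ℕ} [Fintype VN] (m : RModel VB VN A n)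
    (P : Problem VB VN A) : Prop :=
  m.validWith P (TS P)

/-- The decoding of the rolled-up/standard encoding: the sequences in which each
action `a` occurs `u a` times consecutively. -/
def decodesRolled {A : Type} (u : A → ℕ) (α : List A) : Prop :=
  ∃ l : List A, l.Nodup ∧ (∀ a, a ∈ l) ∧
    α = l.flatMap (fun a => List.replicate (u a) a)

/-- The sequences of actions associated to the model `m` of `Π^R_n`/`Π^S_n`
(the set `(Π^R_n)⁻¹` is the union of `m.plans` over the models `m`). -/
def RModel.plans {VB VN A : Type} {n : ℕ} (m : RModel VB VN A n) (α : List A) : Prop :=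
  ∃ αs : Fin n → List A, (∀ i, decodesRolled (m.u i) (αs i)) ∧ α = (List.ofFn αs).flatten

/-- `Π^R_n` is satisfiable. -/
def satR {VB VN A : Type} [Fintype VN] (P : Problem VB VN A) (n : ℕ) : Prop :=
  ∃ m : RModel VB VN A n, m.validR P

/-- `Π^S_n` is satisfiable. -/
def satS {VB VN A : Type} [Fintype VN] (P : Problem VB VN A) (n : ℕ) : Prop :=
  ∃ m : RModel VB VN A n, m.validS P

/-! ## The R²∃ <-encoding Π^< -/

/-- Value of `v^{≪,·}` after chaining through the actions of `l`:
the last auxiliary variable of an action of `l` assigning `v`, else the initial value. -/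
noncomputable def chainB {VB VN A : Type} (acts : A → Act VB VN) (l : List A)
    (β : VB → Bool) (aux : A → VB → Bool) (v : VB) : Bool :=
  l.foldl (fun val b => if ((acts b).effB v).isSome then aux b v else val) (β v)

noncomputable def chainN {VB VN A : Type} (acts : A → Act VB VN) (l : List A)
    (ν : VN → ℚ) (aux : A → VN → ℚ) (x : VN) : ℚ :=
  l.foldl (fun val b => if ((acts b).effN x).isSome then aux b x else val) (ν x)

/-- The actions strictly preceding `a` in the total order `ord`. -/
noncomputable def before {A : Type} (ord : List A) (a : A) : List A :=
  ord.takeWhile (fun b => decide (b ≠ a))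

/-- The symbolic transition relation `T^<(X,A,X')` of the R²∃ `<`-encoding.
`actb` gives the values of the Boolean action variables, `auxB`/`auxN` the values of the
fresh state variables `v^a`. -/
def Tlt {VB VN A : Type} [Fintype VN] (P : Problem VB VN A) (ord : List A)
    (β : VB → Bool) (ν : VN → ℚ) (actb : A → Bool)
    (auxB : A → VB → Bool) (auxN : A → VN → ℚ)
    (β' : VB → Bool) (ν' : VN → ℚ) : Prop :=
  -- pre^<(A)
  (∀ a, actb a = true →
    (∀ v, PropCond.isFalse v ∈ (P.acts a).preB →
      chainB P.acts (before ord a) β auxB v = false) ∧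
    (∀ v, PropCond.isTrue v ∈ (P.acts a).preB →
      chainB P.acts (before ord a) β auxB v = true) ∧
    (∀ c ∈ (P.acts a).preN,
      c.op.holds (c.expr.eval (chainN P.acts (before ord a) ν auxN)))) ∧
  -- eff^<(A)
  (∀ a v b, (P.acts a).effB v = some b →
    (actb a = true → auxB a v = b) ∧
    (actb a = false → auxB a v = chainB P.acts (before ord a) β auxB v)) ∧
  (∀ a x e, (P.acts a).effN x = some e →
    (actb a = true → auxN a x = e.eval (chainN P.acts (before ord a) ν auxN)) ∧
    (actb a = false → auxN a x = chainN P.acts (before ord a) ν auxN x)) ∧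
  -- frame^<(V_B ∪ V_N)
  (∀ v, β' v = chainB P.acts ord β auxB v) ∧
  (∀ x, ν' x = chainN P.acts ord ν auxN x)

/-- A (candidate) model of `Π^<_n`. -/
structure LtModel (VB VN A : Type) (n : ℕ) where
  β : Fin (n + 1) → VB → Bool
  ν : Fin (n + 1) → VN → ℚ
  actb : Fin n → A → Bool
  auxB : Fin n → A → VB → Bool
  auxN : Fin n → A → VN → ℚ

def LtModel.valid {VB VN A : Type} {n : ℕ} [Fintype VN] (m : LtModel VB VN A n)
    (P : Problem VB VN A) (ord : List A) : Prop :=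
  m.β 0 = P.init.boolVal ∧ m.ν 0 = P.init.numVal ∧
  (∀ i : Fin n, Tlt P ord (m.β i.castSucc) (m.ν i.castSucc) (m.actb i)
      (m.auxB i) (m.auxN i) (m.β i.succ) (m.ν i.succ)) ∧
  P.goalSat (m.β (Fin.last n)) (m.ν (Fin.last n))

/-- The plan decoded from a model of `Π^<_n`: at each step, the actions of `ord`
whose Boolean action variable is true, in the order of `ord`. -/
def LtModel.plan {VB VN A : Type} {n : ℕ} (m : LtModel VB VN A n) (ord : List A) : List A :=
  (List.ofFn fun i : Fin n => ord.filter (m.actb i)).flatten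

/-- `Π^<_n` is satisfiable. -/
def satLt {VB VN A : Type} [Fintype VN] (P : Problem VB VN A) (ord : List A) (n : ℕ) : Prop :=
  ∃ m : LtModel VB VN A n, m.valid P ord

/-! ## The pattern ≺-encoding Π^≺ -/

/-- `σ^{≺₁}(v)` for Boolean `v`, where `≺₁` is the prefix of `pat` of length `j`
(`act j` is the value of the action variable of the `j`-th occurrence in the pattern). -/
noncomputable def sigB {VB VN A : Type} (acts : A → Act VB VN) (pat : List A)
    (act : ℕ → ℕ) (β : VB → Bool) : ℕ → VB → Bool
  | 0 => β
  | j + 1 => fun v =>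
      match pat[j]? with
      | none => sigB acts pat act β j v
      | some a =>
          match (acts a).effB v with
          | some true => sigB acts pat act β j v || decide (0 < act j)
          | some false => sigB acts pat act β j v && decide (act j = 0)
          | none => sigB acts pat act β j v

/-- `σ^{≺₁}(x)` for numeric `x` (`aux j` gives the values of the fresh variables
`x^{≺₁;a}` introduced for the general assignments of the `j`-th occurrence). -/
noncomputable def sigN {VB VN A : Type} [Fintype VN] (acts : A → Act VB VN) (pat : List A)
    (act : ℕ → ℕ) (aux : ℕ → VN → ℚ) (ν : VN → ℚ) : ℕ → VN → ℚ
  | 0 => ν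
  | j + 1 => fun x =>
      match pat[j]? with
      | none => sigN acts pat act aux ν j x
      | some a =>
          match (acts a).effN x with
          | none => sigN acts pat act aux ν j x
          | some e =>
              if (acts a).isIncr x e then
                sigN acts pat act aux ν j x +
                  (act j : ℚ) * (incrPart e x).eval (sigN acts pat act aux ν j)
              else aux j x

/-- The symbolic transition relation `T^≺(X,A,X')` of the pattern `≺`-encoding. -/
def Tpat {VB VN A : Type} [Fintype VN] (P : Problem VB VN A) (pat : List A)
    (β : VB → Bool) (ν : VN → ℚ) (act : ℕ → ℕ) (aux : ℕ → VN → ℚ)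
    (β' : VB → Bool) (ν' : VN → ℚ) : Prop :=
  (∀ (j : ℕ) (hj : j < pat.length),
    -- pre^≺(A)
    (∀ v, PropCond.isFalse v ∈ (P.acts (pat.get ⟨j, hj⟩)).preB → 0 < act j →
      sigB P.acts pat act β j v = false) ∧
    (∀ v, PropCond.isTrue v ∈ (P.acts (pat.get ⟨j, hj⟩)).preB → 0 < act j →
      sigB P.acts pat act β j v = true) ∧
    (∀ c ∈ (P.acts (pat.get ⟨j, hj⟩)).preN,
      (0 < act j → c.op.holds (c.expr.eval (sigN P.acts pat act aux ν j))) ∧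
      (1 < act j → c.op.holds
        (rolledEval (P.acts (pat.get ⟨j, hj⟩)) (act j) c.expr (sigN P.acts pat act aux ν j)))) ∧
    -- eff^≺(A) (for the general assignments)
    (∀ x e, (P.acts (pat.get ⟨j, hj⟩)).effN x = some e →
      ¬ (P.acts (pat.get ⟨j, hj⟩)).isIncr x e →
      (act j = 0 → aux j x = sigN P.acts pat act aux ν j x) ∧
      (0 < act j → aux j x = e.eval (sigN P.acts pat act aux ν j))) ∧
    -- amo^≺(A)
    (¬ (P.acts (pat.get ⟨j, hj⟩)).eligible → act j ≤ 1)) ∧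
  -- frame^≺(V_B ∪ V_N)
  (∀ v, β' v = sigB P.acts pat act β pat.length v) ∧
  (∀ x, ν' x = sigN P.acts pat act aux ν pat.length x)

/-- The sequence decoded from the values `act` of the action variables of the pattern:
the `j`-th occurrence repeated `act j` times, in the order of the pattern. -/
def decodePat {A : Type} (pat : List A) (act : ℕ → ℕ) : List A :=
  (List.ofFn fun j : Fin pat.length => List.replicate (act j.val) (pat.get j)).flatten

/-- A (candidate) model of `Π^≺_n`. -/
structure PatModel (VB VN A : Type) (n : ℕ) where
  β : Fin (n + 1) → VB → Bool
  ν : Fin (n + 1) → VN → ℚ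
  act : Fin n → ℕ → ℕ
  aux : Fin n → ℕ → VN → ℚ

def PatModel.valid {VB VN A : Type} {n : ℕ} [Fintype VN] (m : PatModel VB VN A n)
    (P : Problem VB VN A) (pat : List A) : Prop :=
  m.β 0 = P.init.boolVal ∧ m.ν 0 = P.init.numVal ∧
  (∀ i : Fin n, Tpat P pat (m.β i.castSucc) (m.ν i.castSucc) (m.act i) (m.aux i)
      (m.β i.succ) (m.ν i.succ)) ∧
  P.goalSat (m.β (Fin.last n)) (m.ν (Fin.last n))

/-- The plan decoded from a model of `Π^≺_n`. -/
def PatModel.plan {VB VN A : Type} {n : ℕ} (m : PatModel VB VN A n) (pat : List A) : List A :=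
  (List.ofFn fun i : Fin n => decodePat pat (m.act i)).flatten

/-- `Π^≺_n` is satisfiable. -/
def satPat {VB VN A : Type} [Fintype VN] (P : Problem VB VN A) (pat : List A) (n : ℕ) : Prop :=
  ∃ m : PatModel VB VN A n, m.valid P pat

/-! ## Abstract encodings -/

/-- An abstract encoding `Π^E = ⟨X, A, I(X), T(X,A,X'), G(X)⟩` of a problem:
`XAsgn` is the type of assignments to the state variables `X ⊇ V_B ∪ V_N`
(with projections giving the values of the variables of `V_B ∪ V_N`), `AAsgn` the type
of assignments to the action variables, `T` the symbolic transition relation and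
`decode` its decoding function, associating at least one action sequence to each model. -/
structure Encoding (VB VN A : Type) where
  XAsgn : Type
  AAsgn : Type
  projB : XAsgn → VB → Bool
  projN : XAsgn → VN → ℚ
  T : XAsgn → AAsgn → XAsgn → Prop
  decode : XAsgn → AAsgn → XAsgn → List A → Prop
  decode_exists : ∀ x u x', T x u x' → ∃ α, decode x u x' α

def Encoding.stateOf {VB VN A : Type} (E : Encoding VB VN A) (x : E.XAsgn) : PState VB VN :=
  ⟨E.projB x, E.projN x⟩

/-- The symbolic transition relation of `E` is correct: every action sequence
corresponding to a model of `T` is executable in the state given by the model and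
leads to the state given by the primed variables. -/
def Encoding.correctT {VB VN A : Type} [Fintype VN] (E : Encoding VB VN A)
    (P : Problem VB VN A) : Prop :=
  ∀ x u x', E.T x u x' → ∀ α, E.decode x u x' α →
    execSeq P.acts α (E.stateOf x) = some (E.stateOf x')

/-- A (candidate) model of `Π^E_n`. -/
structure EncModel {VB VN A : Type} (E : Encoding VB VN A) (n : ℕ) where
  xs : Fin (n + 1) → E.XAsgn
  us : Fin n → E.AAsgn

def EncModel.valid {VB VN A : Type} [Fintype VN] {E : Encoding VB VN A} {n : ℕ}
    (m : EncModel E n) (P : Problem VB VN A) : Prop :=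
  E.projB (m.xs 0) = P.init.boolVal ∧ E.projN (m.xs 0) = P.init.numVal ∧
  (∀ i : Fin n, E.T (m.xs i.castSucc) (m.us i) (m.xs i.succ)) ∧
  P.goalSat (E.projB (m.xs (Fin.last n))) (E.projN (m.xs (Fin.last n)))

/-- The action sequences associated to a model of `Π^E_n`
(`(Π^E_n)⁻¹` is the union of `m.plans` over the models `m` of `Π^E_n`). -/
def EncModel.plans {VB VN A : Type} {E : Encoding VB VN A} {n : ℕ}
    (m : EncModel E n) (α : List A) : Prop :=
  ∃ αs : Fin n → List A,
    (∀ i, E.decode (m.xs i.castSucc) (m.us i) (m.xs i.succ) (αs i)) ∧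
    α = (List.ofFn αs).flatten

/-- The quantity `Δ` for an action `a` and an expression `ψ`: the sum, over the linear
increments `x += ψ₁` of `a` with `x` occurring in `ψ`, of `ψ₁` weighted by the coefficient
of `x` in `ψ`. -/
noncomputable def deltaVal {VB VN : Type} [Fintype VN] (a : Act VB VN)
    (ψ : LinExpr VN) (ν : VN → ℚ) : ℚ :=
  ∑ x, ψ.coeff x *
    (match a.effN x with
     | some e => if a.isIncr x e then (incrPart e x).eval ν else 0
     | none => 0)

/-- Interpolation for comparison conditions along an arithmetic progression. -/
lemma comp_interp (op : CompOp) (p d : ℚ) (i m : ℕ) (him : i ≤ m)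
    (h0 : op.holds p) (hm : op.holds (p + (m : ℚ) * d)) :
    op.holds (p + (i : ℚ) * d) := by
  have hiq : (i : ℚ) ≤ (m : ℚ) := by exact_mod_cast him
  have hi0 : (0 : ℚ) ≤ (i : ℚ) := by positivity
  cases op with
  | ge =>
    simp only [CompOp.holds] at *
    rcases le_or_gt 0 d with hd | hd
    · nlinarith
    · nlinarith
  | gt =>
    simp only [CompOp.holds] at *
    rcases le_or_gt 0 d with hd | hd
    · nlinarith
    · nlinarith
  | eq =>
    simp only [CompOp.holds] at *
    rcases Nat.eq_zero_or_pos m with hm0 | hm0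
    · have : i = 0 := Nat.le_zero.mp (hm0 ▸ him)
      simp [this, h0]
    · have hmne : (m : ℚ) ≠ 0 := by
        exact_mod_cast hm0.ne'
      have hd : d = 0 := by
        have h1 : (m : ℚ) * d = 0 := by linarith
        rcases mul_eq_zero.mp h1 with h | h
        · exact absurd h hmne
        · exact h
      simp [hd, h0]

/-- Evaluation of a linear expression only depends on variables with nonzero coefficient. -/
lemma eval_congr' {VN : Type} [Fintype VN] (e : LinExpr VN) (ν ν' : VN → ℚ)
    (h : ∀ x, e.coeff x ≠ 0 → ν x = ν' x) : e.eval ν = e.eval ν' := by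
  unfold LinExpr.eval
  congr 1
  apply Finset.sum_congr rfl
  intro x _
  by_cases hx : e.coeff x = 0
  · simp [hx]
  · rw [h x hx]

/-- Splitting the value of an increment effect. -/
lemma eval_incr' {VN : Type} [Fintype VN] (e : LinExpr VN) (x : VN) (hx : e.coeff x = 1)
    (ν : VN → ℚ) : e.eval ν = ν x + (incrPart e x).eval ν := by
  unfold LinExpr.eval incrPart
  simp only
  have h1 := Finset.add_sum_erase Finset.univ (fun y => e.coeff y * ν y) (Finset.mem_univ x)
  have h2 := Finset.add_sum_erase Finset.univ
      (fun y => Function.update e.coeff x 0 y * ν y) (Finset.mem_univ x)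
  have h3 : ∑ y ∈ Finset.univ.erase x, e.coeff y * ν y
      = ∑ y ∈ Finset.univ.erase x, Function.update e.coeff x 0 y * ν y := by
    apply Finset.sum_congr rfl
    intro y hy
    rw [Function.update_of_ne (Finset.ne_of_mem_erase hy)]
  rw [← h1, ← h2, h3]
  simp only [hx, Function.update_self]
  ring

/-- if `a` is eligible for rolling, no variable of a numeric precondition
of `a` is the target of a simple or Boolean assignment of `a` (numeric-precondition
variables are unassigned or targets of linear increments), `a` is executable in `s`,
and `s` satisfies `ψ[a] ⊵ 0` with the action variable interpreted as `k` (i.e.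
`s(ψ) + (k-1)·s(Δ) ⊵ 0`), then `a^k` is executable in `s`. -/
theorem rolling_executable
    {VB VN : Type} [Fintype VB] [Fintype VN]
    (a : Act VB VN) (ha : a.eligible)
    (hvars : ∀ c ∈ a.preN, ∀ x, c.expr.coeff x ≠ 0 →
      ¬ a.assignsN x ∨ ∃ e, a.effN x = some e ∧ a.isIncr x e)
    (k : ℕ) (hk : 1 ≤ k) (s : PState VB VN)
    (hexe : a.execIn s)
    (hrolled : ∀ c ∈ a.preN,
      c.op.holds (c.expr.eval s.numVal + ((k : ℚ) - 1) * deltaVal a c.expr s.numVal)) :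
    ∃ t, execSeq (id : Act VB VN → Act VB VN) (List.replicate k a) s = some t := by
  obtain ⟨hB1, hB2, _, _⟩ := ha
  set δ : VN → ℚ := fun x =>
    match a.effN x with
    | some e => if a.isIncr x e then (incrPart e x).eval s.numVal else 0
    | none => 0 with hδ
  have hdelta : ∀ c : NumCond VN, deltaVal a c.expr s.numVal = ∑ x, c.expr.coeff x * δ x := by
    intro c; rfl
  have main : ∀ n i (t : PState VB VN), i + n ≤ k →
      (∀ c ∈ a.preB, c.holds t.boolVal) →
      (∀ x, a.effN x = none → t.numVal x = s.numVal x) →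
      (∀ x e, a.effN x = some e → a.isIncr x e →
        t.numVal x = s.numVal x + (i : ℚ) * δ x) →
      ∃ t', execSeq (id : Act VB VN → Act VB VN) (List.replicate n a) t = some t' := by
    intro n
    induction n with
    | zero => intro i t _ _ _ _; exact ⟨t, rfl⟩
    | succ n ih =>
      intro i t hik hP hU hI
      -- value of numeric preconditions in t
      have heval : ∀ c ∈ a.preN, c.expr.eval t.numVal
          = c.expr.eval s.numVal + (i : ℚ) * deltaVal a c.expr s.numVal := by
        intro c hc
        have h1 : c.expr.eval t.numVal
            = c.expr.eval (fun x => s.numVal x + (i : ℚ) * δ x) := by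
          apply eval_congr'
          intro x hx
          rcases hvars c hc x hx with hna | ⟨e, he, hie⟩
          · have hnone : a.effN x = none := by
              by_contra h
              exact hna h
            have hδ0 : δ x = 0 := by simp [hδ, hnone]
            rw [hU x hnone, hδ0, mul_zero, add_zero]
          · exact hI x e he hie
        rw [h1, hdelta]
        unfold LinExpr.eval
        rw [Finset.mul_sum]
        rw [show ∀ (f g : VN → ℚ), (∑ x, c.expr.coeff x * (f x + (i : ℚ) * g x))
            = (∑ x, c.expr.coeff x * f x) + ∑ x, (i : ℚ) * (c.expr.coeff x * g x) from by
          intro f g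
          rw [← Finset.sum_add_distrib]
          apply Finset.sum_congr rfl
          intro x _
          ring]
        ring
      -- a is executable in t
      have hkm : i ≤ k - 1 := by omega
      have hexec_t : a.execIn t := by
        refine ⟨hP, ?_⟩
        intro c hc
        unfold NumCond.holds
        rw [heval c hc]
        apply comp_interp c.op _ _ i (k - 1) hkm (hexe.2 c hc)
        have hcast : ((k - 1 : ℕ) : ℚ) = (k : ℚ) - 1 := by
          have := Nat.cast_sub hk (R := ℚ)
          simpa using this
        rw [hcast]
        exact hrolled c hc
      -- the invariants hold in (a.result t)
      have hP' : ∀ c ∈ a.preB, c.holds (a.result t).boolVal := by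
        intro c hc
        cases c with
        | isTrue v =>
          have ht : t.boolVal v = true := hP _ hc
          simp only [PropCond.holds, Act.result]
          cases h : a.effB v with
          | none => simpa [h] using ht
          | some b =>
            cases b with
            | true => simp [h]
            | false => exact absurd h (hB2 v hc)
        | isFalse v =>
          have ht : t.boolVal v = false := hP _ hc
          simp only [PropCond.holds, Act.result]
          cases h : a.effB v with
          | none => simpa [h] using ht
          | some b =>
            cases b with
            | false => simp [h]
            | true => exact absurd h (hB1 v hc)
      have hU' : ∀ x, a.effN x = none → (a.result t).numVal x = s.numVal x := by
        intro x hx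
        simp only [Act.result, hx]
        exact hU x hx
      have hI' : ∀ x e, a.effN x = some e → a.isIncr x e →
          (a.result t).numVal x = s.numVal x + ((i + 1 : ℕ) : ℚ) * δ x := by
        intro x e he hie
        have hres : (a.result t).numVal x = e.eval t.numVal := by
          simp only [Act.result, he]
        have hsplit := eval_incr' e x hie.1 t.numVal
        have hinv : (incrPart e x).eval t.numVal = (incrPart e x).eval s.numVal := by
          apply eval_congr'
          intro y hy
          have hyne : a.effN y = none := by
            by_cases hxy : y = x
            · subst hxy
              exact absurd (by simp [incrPart]) hy
            · by_contra h
              exact hy (by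
                have := hie.2 y h hxy
                simpa [incrPart, Function.update_of_ne hxy] using this)
          exact hU y hyne
        have hδx : δ x = (incrPart e x).eval s.numVal := by
          simp [hδ, he, hie]
        rw [hres, hsplit, hinv, hI x e he hie, ← hδx]
        push_cast
        ring
      have hstep := ih (i + 1) (a.result t) (by omega) hP' hU' hI'
      obtain ⟨t', ht'⟩ := hstep
      refine ⟨t', ?_⟩
      rw [List.replicate_succ]
      simp only [execSeq, id_eq, if_pos hexec_t]
      exact ht'
  have h0 : ∀ x e, a.effN x = some e → a.isIncr x e →
      s.numVal x = s.numVal x + ((0 : ℕ) : ℚ) * δ x := by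
    intro x e _ _; simp
  exact main k 0 s (by omega) hexe.1 (fun x _ => rfl) h0
end PatternPlanning
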